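/- Let α = (α₁, α₂) ∈ ℝ² with α₂ ≠ 0 be such that there exist c > 0 with |α₁k₂ − α₂k₁| ≥ c/|k₂| for all k ∈ ℤ² with k₂ ≠ 0, and |k₁| ≥ c for k₂ = 0, k₁ ≠ 0. Then there is a constant c_α > 0 such that for every mean-zero f ∈ H¹(𝕋²), ‖∇f‖_{L²(𝕋²)} · ‖⟨∇f, α⟩‖_{L²(𝕋²)} ≥ c_α·‖f‖²_{L²(𝕋²)}. -/
import Mathlib


open Real

/- We model a mean-zero function `f ∈ H¹(𝕋²)` on the flat torus `𝕋² = ℝ²/(2πℤ)²`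
by its Fourier coefficients `a : ℤ × ℤ → ℂ`, `f = Σ aₖ e^{ik·x}`, `a₀ = 0`.
By Parseval, `‖f‖²_{L²} = (2π)² Σ |aₖ|²`, `‖∇f‖²_{L²} = (2π)² Σ |k|²|aₖ|²` and
`‖⟨∇f,α⟩‖²_{L²} = (2π)² Σ ⟨k,α⟩²|aₖ|²`.  All inequalities below are homogeneous
in the number of `L²`-norm factors, so the constant `(2π)²` is harmlessly dropped. -/

/-- `‖f‖²_{L²(𝕋²)}` (modulo the factor `(2π)²`). -/
noncomputable def normSq (a : ℤ × ℤ → ℂ) : ℝ := ∑' k : ℤ × ℤ, ‖a k‖ ^ 2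

/-- `‖∇f‖²_{L²(𝕋²)}` (modulo the factor `(2π)²`). -/
noncomputable def gradSq (a : ℤ × ℤ → ℂ) : ℝ :=
  ∑' k : ℤ × ℤ, (((k.1 : ℝ)) ^ 2 + ((k.2 : ℝ)) ^ 2) * ‖a k‖ ^ 2

/-- `‖⟨∇f, α⟩‖²_{L²(𝕋²)}` (modulo the factor `(2π)²`). -/
noncomputable def dirSq (α : ℝ × ℝ) (a : ℤ × ℤ → ℂ) : ℝ :=
  ∑' k : ℤ × ℤ, (α.1 * k.1 + α.2 * k.2) ^ 2 * ‖a k‖ ^ 2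

/-- `f ∈ H¹(𝕋²)`. -/
def IsH1 (a : ℤ × ℤ → ℂ) : Prop :=
  Summable (fun k : ℤ × ℤ => ‖a k‖ ^ 2) ∧
  Summable (fun k : ℤ × ℤ => (((k.1 : ℝ)) ^ 2 + ((k.2 : ℝ)) ^ 2) * ‖a k‖ ^ 2)

/-- Cauchy-Schwarz for tsums over nonneg reals. -/
lemma tsum_cs {f g : ℤ × ℤ → ℝ} (hf : ∀ k, 0 ≤ f k) (hg : ∀ k, 0 ≤ g k)
    (hf2 : Summable (fun k => f k ^ 2)) (hg2 : Summable (fun k => g k ^ 2)) :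
    ∑' k, f k * g k ≤ Real.sqrt (∑' k, f k ^ 2) * Real.sqrt (∑' k, g k ^ 2) := by
  have hfg : Summable (fun k => f k * g k) := by
    refine Summable.of_nonneg_of_le (fun k => mul_nonneg (hf k) (hg k))
      (fun k => ?_) (hf2.add hg2)
    nlinarith [sq_nonneg (f k - g k)]
  refine Summable.tsum_le_of_sum_le hfg (fun s => ?_)
  calc ∑ k ∈ s, f k * g k
      ≤ Real.sqrt (∑ k ∈ s, f k ^ 2) * Real.sqrt (∑ k ∈ s, g k ^ 2) :=
        Real.sum_mul_le_sqrt_mul_sqrt s f g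
    _ ≤ Real.sqrt (∑' k, f k ^ 2) * Real.sqrt (∑' k, g k ^ 2) := by
        gcongr <;> exact Summable.sum_le_tsum s (fun k _ => sq_nonneg _) ‹_›


/-- If `α = (α₁,α₂)`, `α₂ ≠ 0`, satisfies `|α₁k₂ - α₂k₁| ≥ c/|k₂|` for `k₂ ≠ 0` and
`|k₁| ≥ c` for `k₂ = 0, k₁ ≠ 0`, then a directional Poincaré inequality holds. -/
theorem stmt_3 (α₁ α₂ : ℝ) (hα₂ : α₂ ≠ 0)
    (h : ∃ c > (0 : ℝ),
      (∀ k₁ k₂ : ℤ, k₂ ≠ 0 → |α₁ * k₂ - α₂ * k₁| ≥ c / |(k₂ : ℝ)|) ∧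
      (∀ k₁ : ℤ, k₁ ≠ 0 → |(k₁ : ℝ)| ≥ c)) :
    ∃ cα > (0 : ℝ), ∀ a : ℤ × ℤ → ℂ, IsH1 a → a 0 = 0 →
      Real.sqrt (gradSq a) * Real.sqrt (dirSq (α₁, α₂) a) ≥ cα * normSq a := by
  obtain ⟨c, hc, h1, _⟩ := h
  refine ⟨min c |α₂|, lt_min hc (abs_pos.2 hα₂), ?_⟩
  set cα := min c |α₂| with hcα
  have hcα0 : 0 ≤ cα := le_of_lt (lt_min hc (abs_pos.2 hα₂))
  -- pointwise lower bound
  have key : ∀ k : ℤ × ℤ, k ≠ 0 →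
      cα ≤ Real.sqrt (((k.1:ℝ))^2 + ((k.2:ℝ))^2) * |α₁ * k.1 + α₂ * k.2| := by
    intro k hk
    rcases eq_or_ne k.1 0 with h10 | h10
    · have h20 : k.2 ≠ 0 := by
        intro h20; exact hk (Prod.ext h10 h20)
      have h2abs : (1:ℝ) ≤ |(k.2:ℝ)| := by
        rw [← Int.cast_abs]; exact_mod_cast Int.one_le_abs h20
      have hs : (1:ℝ) ≤ Real.sqrt (((k.1:ℝ))^2 + ((k.2:ℝ))^2) := by
        rw [h10]
        simp only [Int.cast_zero, ne_eq, zero_pow, zero_add]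
        rw [Real.le_sqrt (by norm_num)]
        · nlinarith [abs_nonneg ((k.2:ℝ)), sq_abs ((k.2:ℝ))]
        · positivity
      have habs : |α₂| ≤ |α₁ * k.1 + α₂ * k.2| := by
        rw [h10]
        simp only [Int.cast_zero, mul_zero, zero_add, abs_mul]
        nlinarith [abs_nonneg α₂]
      calc cα ≤ |α₂| := min_le_right _ _
        _ = 1 * |α₂| := (one_mul _).symm
        _ ≤ Real.sqrt (((k.1:ℝ))^2 + ((k.2:ℝ))^2) * |α₁ * k.1 + α₂ * k.2| := by
            apply mul_le_mul hs habs (abs_nonneg _) (le_trans (by norm_num) hs)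
    · have hb := h1 (-k.2) k.1 h10
      have heq : |α₁ * (k.1:ℝ) - α₂ * ((-k.2 : ℤ):ℝ)| = |α₁ * k.1 + α₂ * k.2| := by
        push_cast; ring_nf
      rw [heq] at hb
      have h1abs : (0:ℝ) < |(k.1:ℝ)| := by
        rw [← Int.cast_abs]; exact_mod_cast abs_pos.2 h10
      have hs : |(k.1:ℝ)| ≤ Real.sqrt (((k.1:ℝ))^2 + ((k.2:ℝ))^2) := by
        rw [Real.le_sqrt (abs_nonneg _)]
        · rw [sq_abs]; nlinarith [sq_nonneg ((k.2:ℝ))]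
        · positivity
      have : c ≤ |(k.1:ℝ)| * |α₁ * k.1 + α₂ * k.2| := by
        rw [ge_iff_le, div_le_iff₀ h1abs] at hb
        linarith [hb, mul_comm |α₁ * (k.1:ℝ) + α₂ * k.2| |(k.1:ℝ)|]
      calc cα ≤ c := min_le_left _ _
        _ ≤ |(k.1:ℝ)| * |α₁ * k.1 + α₂ * k.2| := this
        _ ≤ _ := by gcongr
  intro a ha ha0
  obtain ⟨hs0, hs1⟩ := ha
  set f : ℤ × ℤ → ℝ := fun k => Real.sqrt (((k.1:ℝ))^2 + ((k.2:ℝ))^2) * ‖a k‖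
  set g : ℤ × ℤ → ℝ := fun k => |α₁ * k.1 + α₂ * k.2| * ‖a k‖
  have hf2 : ∀ k, f k ^ 2 = (((k.1:ℝ))^2 + ((k.2:ℝ))^2) * ‖a k‖ ^ 2 := by
    intro k
    simp only [f, mul_pow, Real.sq_sqrt (by positivity : (0:ℝ) ≤ ((k.1:ℝ))^2 + ((k.2:ℝ))^2)]
  have hg2 : ∀ k, g k ^ 2 = (α₁ * k.1 + α₂ * k.2) ^ 2 * ‖a k‖ ^ 2 := by
    intro k; simp only [g, mul_pow, sq_abs]
  have hf2s : Summable (fun k => f k ^ 2) := by simpa only [hf2] using hs1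
  have hg2s : Summable (fun k => g k ^ 2) := by
    simp only [hg2]
    refine Summable.of_nonneg_of_le (fun k => by positivity) (fun k => ?_)
      (hs1.mul_left (α₁^2 + α₂^2))
    have : (α₁ * k.1 + α₂ * k.2) ^ 2 ≤ (α₁^2 + α₂^2) * (((k.1:ℝ))^2 + ((k.2:ℝ))^2) := by
      nlinarith [sq_nonneg (α₁ * (k.2:ℝ) - α₂ * k.1)]
    calc (α₁ * k.1 + α₂ * k.2) ^ 2 * ‖a k‖ ^ 2
        ≤ (α₁^2 + α₂^2) * (((k.1:ℝ))^2 + ((k.2:ℝ))^2) * ‖a k‖ ^ 2 := by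
          apply mul_le_mul_of_nonneg_right this (sq_nonneg _)
      _ = (α₁^2 + α₂^2) * ((((k.1:ℝ))^2 + ((k.2:ℝ))^2) * ‖a k‖ ^ 2) := by ring
  have hlow : ∀ k, cα * ‖a k‖ ^ 2 ≤ f k * g k := by
    intro k
    rcases eq_or_ne k 0 with rfl | hk
    · simp [ha0, f, g]
    · have := key k hk
      have : cα * ‖a k‖ ^ 2 ≤ (Real.sqrt (((k.1:ℝ))^2 + ((k.2:ℝ))^2) * |α₁ * k.1 + α₂ * k.2|)
          * ‖a k‖ ^ 2 := mul_le_mul_of_nonneg_right this (sq_nonneg _)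
      calc cα * ‖a k‖ ^ 2 ≤ _ := this
        _ = f k * g k := by simp only [f, g]; ring
  have hfg : Summable (fun k => f k * g k) := by
    refine Summable.of_nonneg_of_le (fun k => by positivity) (fun k => ?_) (hf2s.add hg2s)
    nlinarith [sq_nonneg (f k - g k)]
  have step1 : cα * normSq a ≤ ∑' k, f k * g k := by
    rw [normSq, ← tsum_mul_left]
    exact Summable.tsum_le_tsum hlow (hs0.mul_left cα) hfg
  have step2 := tsum_cs (f := f) (g := g) (fun k => by positivity) (fun k => by positivity)
    hf2s hg2s
  have egrad : ∑' k, f k ^ 2 = gradSq a := by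
    rw [gradSq]; exact tsum_congr hf2
  have edir : ∑' k, g k ^ 2 = dirSq (α₁, α₂) a := by
    rw [dirSq]; exact tsum_congr hg2
  rw [egrad, edir] at step2
  exact le_trans step1 step2
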